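/- arXiv:nlin/0110037 — 5 statements merged into one kernel-verified Lean document; each statement's English description precedes it below -/
import Mathlib

section
/- Let mu_0 > 0 and let 0 < lambda_1 <= lambda_K be positive reals. There exists epsilon with |e^{mu_0} (1 - epsilon * lambda_k)| < 1 simultaneously for all lambda_k in [lambda_1, lambda_K] if and only if lambda_K / lambda_1 < (e^{mu_0} + 1)/(e^{mu_0} - 1); moreover any epsilon with (1 - e^{-mu_0})/lambda_1 < epsilon < (1 + e^{-mu_0})/lambda_K works. -/
open Real

/-- Linear stability / synchronization condition: for `μ₀ > 0` and
`0 < λ₁ ≤ λ_K`, there exists `ε` with `|e^{μ₀}(1 - ελ)| < 1` for all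
`λ ∈ [λ₁, λ_K]` iff `λ_K/λ₁ < (e^{μ₀}+1)/(e^{μ₀}-1)`; moreover any `ε`
with `(1 - e^{-μ₀})/λ₁ < ε < (1 + e^{-μ₀})/λ_K` works. -/
theorem stmt_9 (μ₀ lam1 lamK : ℝ) (hμ : 0 < μ₀) (h₁ : 0 < lam1) (h₁K : lam1 ≤ lamK) :
    ((∃ ε : ℝ, ∀ lam : ℝ, lam1 ≤ lam → lam ≤ lamK → |Real.exp μ₀ * (1 - ε * lam)| < 1) ↔
      lamK / lam1 < (Real.exp μ₀ + 1) / (Real.exp μ₀ - 1)) ∧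
    (∀ ε : ℝ, (1 - Real.exp (-μ₀)) / lam1 < ε → ε < (1 + Real.exp (-μ₀)) / lamK →
      ∀ lam : ℝ, lam1 ≤ lam → lam ≤ lamK → |Real.exp μ₀ * (1 - ε * lam)| < 1) := by
  have hK : 0 < lamK := lt_of_lt_of_le h₁ h₁K
  set E := Real.exp μ₀ with hEdef
  have hE : 1 < E := by
    rw [hEdef, show (1:ℝ) = Real.exp 0 by simp]
    exact Real.exp_lt_exp.mpr hμ
  have hEpos : 0 < E := lt_trans one_pos hE
  have hEne : E ≠ 0 := ne_of_gt hEpos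
  have key : ∀ ε lam : ℝ, |E * (1 - ε * lam)| < 1 ↔
      (E - 1 < E * (ε * lam) ∧ E * (ε * lam) < E + 1) := by
    intro ε lam
    rw [abs_lt]
    constructor <;> rintro ⟨a, b⟩ <;> constructor <;> nlinarith
  have part2 : ∀ ε : ℝ, (1 - Real.exp (-μ₀)) / lam1 < ε → ε < (1 + Real.exp (-μ₀)) / lamK →
      ∀ lam : ℝ, lam1 ≤ lam → lam ≤ lamK → |E * (1 - ε * lam)| < 1 := by
    intro ε hlo hhi lam hl hr
    rw [Real.exp_neg] at hlo hhi
    have hinv : E * E⁻¹ = 1 := mul_inv_cancel₀ hEne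
    have hinvpos : 0 < E⁻¹ := inv_pos.mpr hEpos
    have hlo' : 1 - E⁻¹ < ε * lam1 := (div_lt_iff₀ h₁).mp hlo
    have hhi' : ε * lamK < 1 + E⁻¹ := (lt_div_iff₀ hK).mp hhi
    have hεpos : 0 < ε := by nlinarith
    rw [key]
    constructor
    · nlinarith [mul_le_mul_of_nonneg_left hl hεpos.le]
    · nlinarith [mul_le_mul_of_nonneg_left hr hεpos.le]
  refine ⟨⟨?_, ?_⟩, part2⟩
  · rintro ⟨ε, hall⟩
    have A := (key ε lam1).mp (hall lam1 le_rfl h₁K)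
    have B := (key ε lamK).mp (hall lamK h₁K le_rfl)
    rw [div_lt_div_iff₀ h₁ (by linarith : (0:ℝ) < E - 1)]
    have hεpos : 0 < ε := by nlinarith [A.1, mul_pos hEpos h₁]
    nlinarith [mul_lt_mul_of_pos_right A.1 hK, mul_lt_mul_of_pos_right B.2 h₁]
  · intro hr
    have hr' : lamK * (E - 1) < (E + 1) * lam1 :=
      (div_lt_div_iff₀ h₁ (by linarith : (0:ℝ) < E - 1)).mp hr
    have hab : (1 - Real.exp (-μ₀)) / lam1 < (1 + Real.exp (-μ₀)) / lamK := by
      rw [Real.exp_neg, div_lt_div_iff₀ h₁ hK,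
        show (1 - E⁻¹) = (E - 1) / E by field_simp,
        show (1 + E⁻¹) = (E + 1) / E by field_simp,
        div_mul_eq_mul_div, div_mul_eq_mul_div, div_lt_div_iff₀ hEpos hEpos]
      nlinarith [mul_lt_mul_of_pos_right hr' hEpos]
    refine ⟨((1 - Real.exp (-μ₀)) / lam1 + (1 + Real.exp (-μ₀)) / lamK) / 2, ?_⟩
    exact part2 _ (by linarith) (by linarith)
end

section
/- For the cycle graph on m vertices with nearest-neighbor coupling and mu_0 = log 2 (the fully chaotic quadratic map), the synchronization condition lambda_K / lambda_1 < (e^{mu_0}+1)/(e^{mu_0}-1) = 3 holds if and only if m <= 5. -/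
open Real

/-- For the cycle on `m ≥ 3` vertices with nearest-neighbor coupling and `μ₀ = log 2`
(the fully chaotic quadratic map), we have `(e^{μ₀}+1)/(e^{μ₀}-1) = 3`, and the
synchronization condition `λ_K / λ₁ < 3` holds if and only if `m ≤ 5`. -/
theorem stmt_10 (m : ℕ) (hm : 3 ≤ m)
    (lam1 lamK : ℝ)
    (h1 : lam1 = 1 - Real.cos (2 * π / m))
    (hK : lamK = if Even m then (2 : ℝ) else 1 + Real.cos (π / m)) :
    (Real.exp (Real.log 2) + 1) / (Real.exp (Real.log 2) - 1) = 3 ∧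
    (lamK / lam1 < 3 ↔ m ≤ 5) := by
  have h2 : Real.exp (Real.log 2) = 2 := Real.exp_log (by norm_num)
  refine ⟨by rw [h2]; norm_num, ?_⟩
  subst h1 hK
  have hpi := Real.pi_pos
  by_cases h5 : m ≤ 5
  · simp only [h5, iff_true]
    interval_cases m
    · -- m = 3
      have e1 : (2 * π / (3:ℕ) : ℝ) = 2 * (π / 3) := by push_cast; ring
      have e2 : ((π : ℝ) / (3:ℕ)) = π / 3 := by push_cast; ring
      rw [e1, e2, Real.cos_two_mul, Real.cos_pi_div_three,
        if_neg (by decide : ¬ Even 3)]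
      norm_num
    · -- m = 4
      have e1 : (2 * π / (4:ℕ) : ℝ) = π / 2 := by push_cast; ring
      rw [e1, Real.cos_pi_div_two, if_pos (by decide : Even 4)]
      norm_num
    · -- m = 5
      have e1 : (2 * π / (5:ℕ) : ℝ) = 2 * (π / 5) := by push_cast; ring
      have e2 : ((π : ℝ) / (5:ℕ)) = π / 5 := by push_cast; ring
      rw [e1, e2, Real.cos_two_mul, Real.cos_pi_div_five]
      have h5 : (0:ℝ) ≤ 5 := by norm_num
      have hs : Real.sqrt 5 ^ 2 = 5 := Real.sq_sqrt h5
      have hs2 : (2:ℝ) ≤ Real.sqrt 5 := by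
        nlinarith [Real.sqrt_nonneg 5]
      have hs3 : Real.sqrt 5 ≤ 2.5 := by
        nlinarith [Real.sqrt_nonneg 5]
      have hodd : ¬ Even 5 := by decide
      rw [if_neg hodd]
      rw [div_lt_iff₀ (by nlinarith)]
      nlinarith
  · simp only [h5, iff_false, not_lt]
    push_neg at h5
    have hm6 : (6:ℝ) ≤ m := by exact_mod_cast h5
    have hmpos : (0:ℝ) < m := by linarith
    have hx1 : (0:ℝ) < 2 * π / m := by positivity
    have hx2 : (2 * π / m : ℝ) ≤ π / 3 := by
      rw [div_le_iff₀ hmpos]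
      nlinarith
    have hc1 : Real.cos (2 * π / m) < 1 := by
      have := Real.cos_lt_cos_of_nonneg_of_le_pi le_rfl
        (by linarith : (2 * π / m : ℝ) ≤ π) hx1
      simpa using this
    have hc2 : (1:ℝ)/2 ≤ Real.cos (2 * π / m) := by
      have := Real.cos_le_cos_of_nonneg_of_le_pi (le_of_lt hx1)
        (by linarith : (π/3 : ℝ) ≤ π) hx2
      rw [Real.cos_pi_div_three] at this
      linarith
    by_cases he : Even m
    · rw [if_pos he]
      rw [le_div_iff₀ (by linarith)]
      linarith
    · rw [if_neg he]
      set c := Real.cos (π / m) with hc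
      have hy1 : (0:ℝ) < π / m := by positivity
      have hy2 : (π / m : ℝ) ≤ π / 6 := by
        rw [div_le_div_iff₀ hmpos (by norm_num)]
        nlinarith
      have hcge : Real.sqrt 3 / 2 ≤ c := by
        have := Real.cos_le_cos_of_nonneg_of_le_pi (le_of_lt hy1)
          (by linarith : (π/6 : ℝ) ≤ π) hy2
        rw [Real.cos_pi_div_six] at this
        exact this
      have hclt : c < 1 := by
        have := Real.cos_lt_cos_of_nonneg_of_le_pi le_rfl
          (by linarith : (π / m : ℝ) ≤ π) hy1
        simpa using this
      have hs : Real.sqrt 3 ^ 2 = 3 := Real.sq_sqrt (by norm_num)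
      have hge : (5:ℝ)/6 ≤ c := by
        nlinarith [Real.sqrt_nonneg 3]
      have hdb : Real.cos (2 * π / m) = 2 * c ^ 2 - 1 := by
        have : (2 * π / m : ℝ) = 2 * (π / m) := by ring
        rw [this, Real.cos_two_mul]
      rw [hdb]
      rw [le_div_iff₀ (by nlinarith)]
      nlinarith
end

section
/- Global synchronization theorem: Consider the coupled map lattice u(x, n+1) = epsilon * (L f(u(., n)))(x) + f(u(x, n)) on a finite connected graph M, where f : R -> R is differentiable with sup |f'| finite. If epsilon <= 2/(lambda_1 + lambda_K) and (1 - epsilon * lambda_1) * sup |f'| < 1, then the Lyapunov function Phi(n) = ||Lambda u(., n)||^2 satisfies Phi(n+1) <= ((1 - epsilon*lambda_1) * sup|f'|)^2 * Phi(n), and hence Phi(n) -> 0 as n -> infinity, i.e., the system asymptotically synchronizes. -/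
/-!
Up to the factor `1 / |V|`, `Φ n` is the Dirichlet form `u ⬝ᵥ Δ u = ½ ∑_{x ~ y} (u x - u y)²` of
the combinatorial Laplacian `Δ = D - A`, since `D L = -Δ`. Conjugating `-L` by `√D` yields the
symmetric normalized Laplacian `D^{-1/2} Δ D^{-1/2}`; its nonzero eigenvalues are eigenvalues of
`-L`, hence lie in `[λ₁, λ_K]`, where `|1 - ε μ| ≤ 1 - ε λ₁` as soon as `ε (λ₁ + λ_K) ≤ 2`.
Expanding in an orthonormal eigenbasis, the linear step `w ↦ w + ε L w` therefore shrinks the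
Dirichlet form by `(1 - ε λ₁)²`, while the pointwise map `f`, being `C`-Lipschitz, enlarges it by
at most `C²`. So `Φ` decays geometrically.
-/

open Filter Finset Matrix RealInnerProductSpace Module.End

namespace LinearMap.IsSymmetric

variable {E : Type*} [NormedAddCommGroup E] [InnerProductSpace ℝ E] [FiniteDimensional ℝ E]
  {T : E →ₗ[ℝ] E}

theorem inner_apply_self_eq_sum_eigenvalues (hT : T.IsSymmetric) {n : ℕ}
    (hn : Module.finrank ℝ E = n) (x : E) :
    ⟪x, T x⟫ = ∑ i, hT.eigenvalues hn i * (hT.eigenvectorBasis hn).repr x i ^ 2 := by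
  rw [← (hT.eigenvectorBasis hn).repr.inner_map_map, PiLp.inner_apply]
  refine sum_congr rfl fun i _ => ?_
  rw [eigenvectorBasis_apply_self_apply, Real.inner_apply, RCLike.ofReal_real_eq_id, id_eq]
  ring

theorem inner_sub_smul_apply_le (hT : T.IsSymmetric) {lam₁ lamK ε : ℝ}
    (hspec : ∀ μ, HasEigenvalue T μ → μ = 0 ∨ lam₁ ≤ μ ∧ μ ≤ lamK) (hlam₁ : 0 < lam₁)
    (hε : 0 ≤ ε) (hεlam : ε * (lam₁ + lamK) ≤ 2) (x : E) :
    ⟪x - ε • T x, T (x - ε • T x)⟫ ≤ (1 - ε * lam₁) ^ 2 * ⟪x, T x⟫ := by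
  rw [hT.inner_apply_self_eq_sum_eigenvalues rfl, hT.inner_apply_self_eq_sum_eigenvalues rfl,
    mul_sum]
  refine sum_le_sum fun i _ => ?_
  simp only [map_sub, map_smul, PiLp.sub_apply, PiLp.smul_apply, smul_eq_mul,
    eigenvectorBasis_apply_self_apply]
  set μ := hT.eigenvalues rfl i
  set c := (hT.eigenvectorBasis rfl).repr x i
  rcases hspec μ (hT.hasEigenvalue_eigenvalues rfl i) with hμ | ⟨hμ₁, hμK⟩
  · simp [hμ]
  · have hsq : (1 - ε * μ) ^ 2 ≤ (1 - ε * lam₁) ^ 2 :=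
      sq_le_sq' (by nlinarith) (by nlinarith)
    calc μ * (c - ε * (μ * c)) ^ 2 = (1 - ε * μ) ^ 2 * (μ * c ^ 2) := by ring
      _ ≤ (1 - ε * lam₁) ^ 2 * (μ * c ^ 2) := by
        gcongr
        exact mul_nonneg (by linarith) (sq_nonneg c)

end LinearMap.IsSymmetric

namespace SimpleGraph

variable {V : Type*} [Fintype V] (G : SimpleGraph V) [DecidableRel G.Adj]

noncomputable def averagingLaplacian (v : V → ℝ) (x : V) : ℝ :=
  (1 / (G.degree x : ℝ)) * ∑ y ∈ G.neighborFinset x, v y - v x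

noncomputable def sqrtDegreeMul : (V → ℝ) →ₗ[ℝ] EuclideanSpace ℝ V where
  toFun v := WithLp.toLp 2 fun x => √(G.degree x) * v x
  map_add' a b := by ext; simp [mul_add]
  map_smul' c a := by ext; simp [mul_left_comm]

@[simp]
theorem sqrtDegreeMul_apply (v : V → ℝ) (x : V) : G.sqrtDegreeMul v x = √(G.degree x) * v x := rfl

variable [DecidableEq V]

theorem degree_mul_averagingLaplacian (v : V → ℝ) (x : V) :
    (G.degree x : ℝ) * G.averagingLaplacian v x = -(G.lapMatrix ℝ *ᵥ v) x := by
  rw [averagingLaplacian, lapMatrix_mulVec_apply]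
  rcases eq_or_ne (G.degree x) 0 with hx | hx
  · rw [card_eq_zero.mp ((G.card_neighborFinset_eq_degree x).trans hx), hx]
    simp
  · field_simp
    ring

theorem sum_degree_mul_averagingLaplacian (a b : V → ℝ) :
    ∑ x, (G.degree x : ℝ) * a x * G.averagingLaplacian b x = -(a ⬝ᵥ G.lapMatrix ℝ *ᵥ b) := by
  rw [dotProduct, ← sum_neg_distrib]
  refine sum_congr rfl fun x _ => ?_
  rw [mul_right_comm, degree_mul_averagingLaplacian, neg_mul, mul_comm]

theorem lapMatrix_apply_eq_zero_of_degree_eq_zero {R : Type*} [AddGroupWithOne R] {x : V}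
    (hx : G.degree x = 0) (y : V) : G.lapMatrix R x y = 0 := by
  have hadj : ¬G.Adj x y := fun h =>
    (G.degree_pos_iff_exists_adj x).mpr ⟨y, h⟩ |>.ne' hx
  rcases eq_or_ne x y with rfl | hxy
  · simp [lapMatrix, degMatrix, hx]
  · simp [lapMatrix, degMatrix, hxy, hadj]

noncomputable def normalizedLapMatrix : Matrix V V ℝ :=
  fun x y => G.lapMatrix ℝ x y / (√(G.degree x) * √(G.degree y))

theorem isHermitian_normalizedLapMatrix : G.normalizedLapMatrix.IsHermitian := by
  ext x y
  simp [normalizedLapMatrix, (G.isSymm_lapMatrix ℝ).apply x y, mul_comm]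

theorem toEuclideanLin_normalizedLapMatrix_sqrtDegreeMul (v : V → ℝ) :
    toEuclideanLin G.normalizedLapMatrix (G.sqrtDegreeMul v) =
      -G.sqrtDegreeMul (G.averagingLaplacian v) := by
  have hcol (x y : V) : G.normalizedLapMatrix x y * G.sqrtDegreeMul v y =
      G.lapMatrix ℝ x y * v y / √(G.degree x) := by
    rcases eq_or_ne (G.degree y) 0 with hy | hy
    · rw [normalizedLapMatrix, ← (G.isSymm_lapMatrix ℝ).apply,
        G.lapMatrix_apply_eq_zero_of_degree_eq_zero hy]
      simp
    · have : √(G.degree y : ℝ) ≠ 0 := by positivity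
      simp only [normalizedLapMatrix, sqrtDegreeMul_apply]
      field_simp
  ext x
  rw [toLpLin_apply, PiLp.toLp_apply, mulVec, dotProduct]
  simp only [hcol, ← sum_div]
  calc (G.lapMatrix ℝ *ᵥ v) x / √(G.degree x)
      = -((G.degree x : ℝ) * G.averagingLaplacian v x) / √(G.degree x) := by
        rw [degree_mul_averagingLaplacian, neg_neg]
    _ = -((G.degree x / √(G.degree x)) * G.averagingLaplacian v x) := by ring
    _ = -G.sqrtDegreeMul (G.averagingLaplacian v) x := by rw [Real.div_sqrt]; rfl

theorem inner_sqrtDegreeMul_normalizedLapMatrix (v : V → ℝ) :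
    ⟪G.sqrtDegreeMul v, toEuclideanLin G.normalizedLapMatrix (G.sqrtDegreeMul v)⟫ =
      v ⬝ᵥ G.lapMatrix ℝ *ᵥ v := by
  rw [toEuclideanLin_normalizedLapMatrix_sqrtDegreeMul, inner_neg_right, neg_eq_iff_eq_neg,
    ← sum_degree_mul_averagingLaplacian, PiLp.inner_apply]
  refine sum_congr rfl fun x _ => ?_
  have := Real.mul_self_sqrt (Nat.cast_nonneg (G.degree x))
  rw [sqrtDegreeMul_apply, sqrtDegreeMul_apply, Real.inner_apply]
  linear_combination v x * G.averagingLaplacian v x * this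

theorem exists_averagingLaplacian_eigenvector {μ : ℝ}
    (hμ : HasEigenvalue (toEuclideanLin G.normalizedLapMatrix) μ) (hμ0 : μ ≠ 0) :
    ∃ v : V → ℝ, v ≠ 0 ∧ ∀ x, -G.averagingLaplacian v x = μ * v x := by
  obtain ⟨b, hb, hb0⟩ := hμ.exists_hasEigenvector
  rw [mem_eigenspace_iff] at hb
  have hb_isolated (x : V) (hx : G.degree x = 0) : b x = 0 := by
    have hbx := congr_arg (· x) hb
    simp only [toLpLin_apply, mulVec, dotProduct, normalizedLapMatrix,
      G.lapMatrix_apply_eq_zero_of_degree_eq_zero hx, zero_div, zero_mul, sum_const_zero,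
      PiLp.smul_apply, smul_eq_mul, zero_eq_mul] at hbx
    exact hbx.resolve_left hμ0
  set v : V → ℝ := fun x => b x / √(G.degree x)
  have hbv (x : V) : √(G.degree x) * v x = b x := by
    rcases eq_or_ne (G.degree x) 0 with hx | hx
    · simp [hx, hb_isolated x hx]
    · have : √(G.degree x : ℝ) ≠ 0 := by positivity
      exact mul_div_cancel₀ _ this
  have hsv : G.sqrtDegreeMul v = b := by ext x; exact hbv x
  refine ⟨v, fun hv => hb0 (by rw [← hsv, hv, map_zero]), fun x => ?_⟩
  have hx := congr_arg (· x) (G.toEuclideanLin_normalizedLapMatrix_sqrtDegreeMul v)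
  simp only [hsv, hb, PiLp.smul_apply, smul_eq_mul, PiLp.neg_apply, sqrtDegreeMul_apply] at hx
  rcases eq_or_ne (G.degree x) 0 with h0 | h0
  -- at an isolated vertex `L v x = -v x` (as `1 / 0 = 0`), and `v x = b x / √0 = 0`
  · simp [averagingLaplacian, v, h0]
  · have : √(G.degree x : ℝ) ≠ 0 := by positivity
    refine mul_left_cancel₀ this ?_
    linear_combination -hx - μ * hbv x

theorem dotProduct_lapMatrix_mulVec_comp_le {f : ℝ → ℝ} {K : NNReal} (hf : LipschitzWith K f)
    (v : V → ℝ) :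
    (f ∘ v) ⬝ᵥ G.lapMatrix ℝ *ᵥ (f ∘ v) ≤ K ^ 2 * (v ⬝ᵥ G.lapMatrix ℝ *ᵥ v) := by
  simp only [← toLinearMap₂'_apply', lapMatrix_toLinearMap₂', mul_div_assoc', mul_sum]
  gcongr with x _ y _
  split_ifs
  · have h := hf.dist_le_mul (v x) (v y)
    rw [Real.dist_eq, Real.dist_eq] at h
    calc (f (v x) - f (v y)) ^ 2 = |f (v x) - f (v y)| ^ 2 := (sq_abs _).symm
      _ ≤ (K * |v x - v y|) ^ 2 := by gcongr
      _ = K ^ 2 * (v x - v y) ^ 2 := by rw [mul_pow, sq_abs]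
  · simp

theorem dotProduct_lapMatrix_mulVec_add_smul_averagingLaplacian_le {lam₁ lamK ε : ℝ}
    (hspec : ∀ (μ : ℝ) (v : V → ℝ), v ≠ 0 → (∀ x, -G.averagingLaplacian v x = μ * v x) →
      μ = 0 ∨ lam₁ ≤ μ ∧ μ ≤ lamK)
    (hlam₁ : 0 < lam₁) (hε : 0 ≤ ε) (hεlam : ε * (lam₁ + lamK) ≤ 2) (w : V → ℝ) :
    (w + ε • G.averagingLaplacian w) ⬝ᵥ G.lapMatrix ℝ *ᵥ (w + ε • G.averagingLaplacian w) ≤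
      (1 - ε * lam₁) ^ 2 * (w ⬝ᵥ G.lapMatrix ℝ *ᵥ w) := by
  have hT := isSymmetric_toEuclideanLin_iff.mpr G.isHermitian_normalizedLapMatrix
  have hspecT (μ : ℝ) (hμ : HasEigenvalue (toEuclideanLin G.normalizedLapMatrix) μ) :
      μ = 0 ∨ lam₁ ≤ μ ∧ μ ≤ lamK := by
    refine or_iff_not_imp_left.mpr fun hμ0 => ?_
    obtain ⟨v, hv0, hv⟩ := G.exists_averagingLaplacian_eigenvector hμ hμ0
    exact (hspec μ v hv0 hv).resolve_left hμ0
  have hstep : G.sqrtDegreeMul (w + ε • G.averagingLaplacian w) =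
      G.sqrtDegreeMul w - ε • toEuclideanLin G.normalizedLapMatrix (G.sqrtDegreeMul w) := by
    rw [map_add, map_smul, toEuclideanLin_normalizedLapMatrix_sqrtDegreeMul, smul_neg,
      sub_neg_eq_add]
  rw [← inner_sqrtDegreeMul_normalizedLapMatrix, ← inner_sqrtDegreeMul_normalizedLapMatrix, hstep]
  exact hT.inner_sub_smul_apply_le hspecT hlam₁ hε hεlam _

end SimpleGraph

theorem stmt_14_general {V : Type*} [Fintype V] [DecidableEq V]
    (G : SimpleGraph V) [DecidableRel G.Adj]
    (L : (V → ℝ) → (V → ℝ))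
    (hL : ∀ v x, L v x = (1 / (G.degree x : ℝ)) * ∑ y ∈ G.neighborFinset x, v y - v x)
    (inn : (V → ℝ) → (V → ℝ) → ℝ)
    (hinn : ∀ u v, inn u v =
      (1 / (Fintype.card V : ℝ)) * ∑ x, (G.degree x : ℝ) * u x * v x)
    (Λ : (V → ℝ) →ₗ[ℝ] (V → ℝ))
    (hΛ : ∀ u v : V → ℝ, -(inn u (L v)) = inn (Λ u) (Λ v))
    (lam1 lamK : ℝ) (hlam1 : 0 < lam1) (hlamK : lam1 ≤ lamK)
    (heig : ∀ (μ : ℝ) (v : V → ℝ), v ≠ 0 → (∀ x, -(L v x) = μ * v x) →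
      μ = 0 ∨ (lam1 ≤ μ ∧ μ ≤ lamK))
    (f : ℝ → ℝ) (hf : Differentiable ℝ f)
    (C : ℝ) (hC : ∀ x, |deriv f x| ≤ C)
    (ε : ℝ) (hε0 : 0 ≤ ε) (hε : ε ≤ 2 / (lam1 + lamK))
    (hstab : (1 - ε * lam1) * C < 1)
    (u : ℕ → V → ℝ)
    (hdyn : ∀ n x, u (n + 1) x = ε * L (fun y => f (u n y)) x + f (u n x))
    (Φ : ℕ → ℝ) (hΦ : ∀ n, Φ n = inn (Λ (u n)) (Λ (u n))) :
    (∀ n, Φ (n + 1) ≤ ((1 - ε * lam1) * C) ^ 2 * Φ n) ∧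
      Tendsto Φ atTop (nhds 0) := by
  obtain rfl : L = G.averagingLaplacian := funext₂ hL
  have hC0 : 0 ≤ C := (abs_nonneg _).trans (hC 0)
  have hlip : LipschitzWith C.toNNReal f := lipschitzWith_of_nnnorm_deriv_le hf fun x =>
    (Real.le_toNNReal_iff_coe_le hC0).mpr (by simpa using hC x)
  have hεlam : ε * (lam1 + lamK) ≤ 2 := (le_div_iff₀ (by linarith)).mp hε
  have hΦ_eq (n : ℕ) : Φ n = (Fintype.card V : ℝ)⁻¹ * (u n ⬝ᵥ G.lapMatrix ℝ *ᵥ u n) := by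
    rw [hΦ, ← hΛ, hinn, G.sum_degree_mul_averagingLaplacian]
    ring
  have hstep (n : ℕ) : Φ (n + 1) ≤ ((1 - ε * lam1) * C) ^ 2 * Φ n := by
    have hu : u (n + 1) = f ∘ u n + ε • G.averagingLaplacian (f ∘ u n) := by
      ext x
      rw [hdyn, add_comm]
      rfl
    rw [hΦ_eq, hΦ_eq, hu, mul_left_comm, mul_pow, mul_assoc]
    gcongr
    calc _ ≤ (1 - ε * lam1) ^ 2 * ((f ∘ u n) ⬝ᵥ G.lapMatrix ℝ *ᵥ (f ∘ u n)) :=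
          G.dotProduct_lapMatrix_mulVec_add_smul_averagingLaplacian_le heig hlam1 hε0 hεlam _
      _ ≤ (1 - ε * lam1) ^ 2 * (C ^ 2 * (u n ⬝ᵥ G.lapMatrix ℝ *ᵥ u n)) := by
          gcongr
          simpa [hC0] using G.dotProduct_lapMatrix_mulVec_comp_le hlip (u n)
  refine ⟨hstep, ?_⟩
  have hr0 : 0 ≤ ((1 - ε * lam1) * C) ^ 2 := sq_nonneg _
  have hr1 : ((1 - ε * lam1) * C) ^ 2 < 1 :=
    pow_lt_one₀ (mul_nonneg (by nlinarith) hC0) hstab two_ne_zero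
  have hΦ0 (n : ℕ) : 0 ≤ Φ n := by
    rw [hΦ_eq]
    exact mul_nonneg (by positivity) ((G.posSemidef_lapMatrix ℝ).dotProduct_mulVec_nonneg _)
  refine squeeze_zero hΦ0 (fun n => le_geom hr0 n fun k _ => hstep k) ?_
  simpa using (tendsto_pow_atTop_nhds_zero_of_lt_one hr0 hr1).mul_const (Φ 0)

/-- Global synchronization theorem. For the coupled map lattice
`u(x, n+1) = ε (L f(u(·,n)))(x) + f(u(x,n))` on a finite connected graph, if
`ε ≤ 2/(λ₁ + λ_K)` and `(1 - ελ₁)·sup|f'| < 1`, then the Lyapunov function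
`Φ(n) = ‖Λ u(·,n)‖²` satisfies `Φ(n+1) ≤ ((1 - ελ₁)·sup|f'|)² Φ(n)` and hence
`Φ(n) → 0`, i.e., the system asymptotically synchronizes. -/
theorem stmt_14 {V : Type*} [Fintype V] [DecidableEq V] [Nonempty V]
    (G : SimpleGraph V) [DecidableRel G.Adj] (hconn : G.Connected)
    (L : (V → ℝ) → (V → ℝ))
    (hL : ∀ v x, L v x = (1 / (G.degree x : ℝ)) * ∑ y ∈ G.neighborFinset x, v y - v x)
    (inn : (V → ℝ) → (V → ℝ) → ℝ)
    (hinn : ∀ u v, inn u v =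
      (1 / (Fintype.card V : ℝ)) * ∑ x, (G.degree x : ℝ) * u x * v x)
    (Λ : (V → ℝ) →ₗ[ℝ] (V → ℝ))
    (hΛ : ∀ u v : V → ℝ, -(inn u (L v)) = inn (Λ u) (Λ v))
    (lam1 lamK : ℝ) (hlam1 : 0 < lam1) (hlamK : lam1 ≤ lamK)
    (heig : ∀ (μ : ℝ) (v : V → ℝ), v ≠ 0 → (∀ x, -(L v x) = μ * v x) →
      μ = 0 ∨ (lam1 ≤ μ ∧ μ ≤ lamK))
    (f : ℝ → ℝ) (hf : Differentiable ℝ f)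
    (C : ℝ) (hC : ∀ x, |deriv f x| ≤ C)
    (ε : ℝ) (hε0 : 0 ≤ ε) (hε : ε ≤ 2 / (lam1 + lamK))
    (hstab : (1 - ε * lam1) * C < 1)
    (u : ℕ → V → ℝ)
    (hdyn : ∀ n x, u (n + 1) x = ε * L (fun y => f (u n y)) x + f (u n x))
    (Φ : ℕ → ℝ) (hΦ : ∀ n, Φ n = inn (Λ (u n)) (Λ (u n))) :
    (∀ n, Φ (n + 1) ≤ ((1 - ε * lam1) * C) ^ 2 * Φ n) ∧
      Tendsto Φ atTop (nhds 0) :=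
  stmt_14_general G L hL inn hinn Λ hΛ lam1 lamK hlam1 hlamK heig f hf C hC ε hε0 hε hstab u hdyn Φ
    hΦ
end

section
/- Remark after Theorem 1: if epsilon >= 2/(lambda_1 + lambda_K), the coupled map lattice asymptotically synchronizes provided (epsilon * lambda_K - 1) * sup|f'| < 1. -/
/-!
Since `ε ≥ 2 / (λ₁ + λ_K)`, every nonzero eigenvalue `μ` of `-L` satisfies
`|1 - εμ| ≤ ελ_K - 1`. The averaging Laplacian is self-adjoint for the degree-weighted inner
product, so expanding in an orthonormal eigenbasis shows that `I + εL` multiplies the Dirichlet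
energy `Φ = -⟨u, Lu⟩` by at most `(ελ_K - 1)²`, while the mean value theorem shows that applying
`f` pointwise multiplies it by at most `sup |f'|²`. Hence `Φ(n + 1) ≤ ((ελ_K - 1) C)² Φ(n)` and
`Φ` decays geometrically.
-/

open Filter Finset Matrix

noncomputable section

namespace LinearMap.IsSymmetric

variable {E : Type*} [NormedAddCommGroup E] [InnerProductSpace ℝ E] [FiniteDimensional ℝ E]
  {A : E →ₗ[ℝ] E}

theorem inner_map_self_eq_sum (hA : A.IsSymmetric) {n : ℕ} (hn : Module.finrank ℝ E = n)
    (x : E) :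
    inner ℝ (A x) x =
      ∑ i, hA.eigenvalues hn i * (hA.eigenvectorBasis hn).repr x i ^ 2 := by
  rw [← (hA.eigenvectorBasis hn).sum_inner_mul_inner]
  refine sum_congr rfl fun i _ => ?_
  rw [real_inner_comm, ← OrthonormalBasis.repr_apply_apply, ← OrthonormalBasis.repr_apply_apply,
    eigenvectorBasis_apply_self_apply, RCLike.ofReal_real_eq_id, id_eq]
  ring

theorem inner_map_sub_smul_map_le (hA : A.IsSymmetric) {ε c : ℝ}
    (hspec : ∀ μ, Module.End.HasEigenvalue A μ → μ * (1 - ε * μ) ^ 2 ≤ c * μ) (a : E) :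
    inner ℝ (A (a - ε • A a)) (a - ε • A a) ≤ c * inner ℝ (A a) a := by
  have hn : Module.finrank ℝ E = Module.finrank ℝ E := rfl
  rw [hA.inner_map_self_eq_sum hn, hA.inner_map_self_eq_sum hn, mul_sum]
  simp only [map_sub, map_smul, PiLp.sub_apply, PiLp.smul_apply, smul_eq_mul,
    eigenvectorBasis_apply_self_apply, RCLike.ofReal_real_eq_id, id_eq]
  refine sum_le_sum fun i _ => ?_
  have := mul_le_mul_of_nonneg_right (hspec _ (hA.hasEigenvalue_eigenvalues hn i))
    (sq_nonneg ((hA.eigenvectorBasis hn).repr a i))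
  simp only [RCLike.ofReal_real_eq_id, id_eq] at this
  linear_combination this

end LinearMap.IsSymmetric

theorem Module.End.HasEigenvalue.of_conj {R M N : Type*} [CommRing R] [AddCommGroup M]
    [Module R M] [AddCommGroup N] [Module R N] {e : M ≃ₗ[R] N} {f : Module.End R M} {μ : R}
    (h : (e.conj f).HasEigenvalue μ) : f.HasEigenvalue μ := by
  obtain ⟨a, ha⟩ := h.exists_hasEigenvector
  refine Module.End.hasEigenvalue_of_hasEigenvector (x := e.symm a)
    ⟨Module.End.mem_eigenspace_iff.mpr ?_, by simpa using ha.2⟩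
  simpa [LinearEquiv.conj_apply] using congrArg e.symm ha.apply_eq_smul

theorem tendsto_zero_of_le_mul_of_lt_one {u : ℕ → ℝ} {q : ℝ} (hu : ∀ n, 0 ≤ u n) (hq₀ : 0 ≤ q)
    (hq₁ : q < 1) (h : ∀ n, u (n + 1) ≤ q * u n) : Tendsto u atTop (nhds 0) :=
  squeeze_zero hu (fun n => le_geom hq₀ n fun k _ => h k)
    (by simpa using (tendsto_pow_atTop_nhds_zero_of_lt_one hq₀ hq₁).mul_const (u 0))

theorem abs_one_sub_mul_le {lam1 lamK ε μ : ℝ} (hlam1 : 0 < lam1)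
    (hε : 2 / (lam1 + lamK) ≤ ε) (hμ1 : lam1 ≤ μ) (hμK : μ ≤ lamK) :
    |1 - ε * μ| ≤ ε * lamK - 1 := by
  have hsum : 0 < lam1 + lamK := by linarith
  have hε2 : 2 ≤ ε * (lam1 + lamK) := (div_le_iff₀ hsum).mp hε
  have hε0 : 0 ≤ ε := (div_pos two_pos hsum).le.trans hε
  rw [abs_le]
  constructor <;> nlinarith

theorem mul_one_sub_mul_sq_le {lam1 lamK ε μ : ℝ} (hlam1 : 0 < lam1)
    (hε : 2 / (lam1 + lamK) ≤ ε) (hμ : μ = 0 ∨ (lam1 ≤ μ ∧ μ ≤ lamK)) :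
    μ * (1 - ε * μ) ^ 2 ≤ (ε * lamK - 1) ^ 2 * μ := by
  rcases hμ with rfl | ⟨hμ1, hμK⟩
  · simp
  · obtain ⟨hlower, hupper⟩ := abs_le.mp (abs_one_sub_mul_le hlam1 hε hμ1 hμK)
    rw [mul_comm]
    exact mul_le_mul_of_nonneg_right (sq_le_sq' hlower hupper) (by linarith)

namespace SimpleGraph

variable {V : Type*} [Fintype V] (G : SimpleGraph V) [DecidableRel G.Adj]

def avgLap : (V → ℝ) →ₗ[ℝ] (V → ℝ) where
  toFun v x := (1 / (G.degree x : ℝ)) * ∑ y ∈ G.neighborFinset x, v y - v x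
  map_add' v w := by ext x; simp only [Pi.add_apply, sum_add_distrib]; ring
  map_smul' r v := by
    ext x; simp only [Pi.smul_apply, smul_eq_mul, ← mul_sum, RingHom.id_apply]; ring

def degInner (u v : V → ℝ) : ℝ :=
  (1 / (Fintype.card V : ℝ)) * ∑ x, (G.degree x : ℝ) * u x * v x

def dirichletEnergy (v : V → ℝ) : ℝ :=
  (∑ x, ∑ y, if G.Adj x y then (v x - v y) ^ 2 else 0) / (2 * Fintype.card V)

theorem degInner_comm (u v : V → ℝ) : G.degInner u v = G.degInner v u := by
  simp only [degInner, mul_right_comm _ (u _)]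

theorem degInner_neg_right (u v : V → ℝ) : G.degInner u (-v) = -G.degInner u v := by
  simp only [degInner, Pi.neg_apply, mul_neg, sum_neg_distrib]

theorem degInner_avgLap [DecidableEq V] (u v : V → ℝ) :
    G.degInner u (G.avgLap v) = -(u ⬝ᵥ (G.lapMatrix ℝ *ᵥ v)) / Fintype.card V := by
  simp only [degInner, dotProduct, lapMatrix_mulVec_apply, ← sum_neg_distrib, div_eq_inv_mul,
    mul_one]
  congr 1
  refine sum_congr rfl fun x _ => ?_
  by_cases hx : G.degree x = 0
  · have : G.neighborFinset x = ∅ := by rwa [← card_eq_zero, card_neighborFinset_eq_degree]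
    simp [avgLap, hx, this]
  · simp only [avgLap, LinearMap.coe_mk, AddHom.coe_mk]
    field_simp
    ring

theorem degInner_avgLap_comm (u v : V → ℝ) :
    G.degInner u (G.avgLap v) = G.degInner v (G.avgLap u) := by
  classical
  rw [degInner_avgLap, degInner_avgLap, dotProduct_mulVec, ← mulVec_transpose,
    (G.isSymm_lapMatrix ℝ).eq, dotProduct_comm]

theorem degInner_avgLap_self (v : V → ℝ) :
    G.degInner v (G.avgLap v) = -G.dirichletEnergy v := by
  classical
  rw [degInner_avgLap, ← toLinearMap₂'_apply', lapMatrix_toLinearMap₂', dirichletEnergy]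
  ring

theorem dirichletEnergy_nonneg (v : V → ℝ) : 0 ≤ G.dirichletEnergy v := by
  unfold dirichletEnergy
  positivity

theorem dirichletEnergy_comp_le {f : ℝ → ℝ} {C : ℝ} (hf : ∀ p q, |f p - f q| ≤ C * |p - q|)
    (v : V → ℝ) : G.dirichletEnergy (f ∘ v) ≤ C ^ 2 * G.dirichletEnergy v := by
  unfold dirichletEnergy
  rw [← mul_div_assoc, mul_sum]
  gcongr with x _
  rw [mul_sum]
  gcongr with y _
  rw [mul_ite, mul_zero]
  split_ifs
  · rw [← sq_abs, ← sq_abs (v x - v y), ← mul_pow]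
    exact pow_le_pow_left₀ (abs_nonneg _) (hf (v x) (v y)) 2
  · rfl

theorem dirichletEnergy_of_subsingleton [Subsingleton V] (v : V → ℝ) :
    G.dirichletEnergy v = 0 := by
  have hnadj (x y : V) : ¬G.Adj x y := Subsingleton.elim x y ▸ G.irrefl
  simp [dirichletEnergy, hnadj]

-- The weights `√(deg x / |V|)` turn `degInner` into the Euclidean inner product.
def degWeightEquiv (hdeg : ∀ x, 0 < G.degree x) : (V → ℝ) ≃ₗ[ℝ] EuclideanSpace ℝ V :=
  (LinearEquiv.piCongrRight fun x => LinearEquiv.smulOfNeZero ℝ ℝ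
      (√(G.degree x / Fintype.card V))
      (Real.sqrt_ne_zero'.mpr (div_pos (Nat.cast_pos.mpr (hdeg x))
        (Nat.cast_pos.mpr (Fintype.card_pos_iff.mpr ⟨x⟩))))).trans
    (WithLp.linearEquiv 2 ℝ (V → ℝ)).symm

theorem inner_degWeightEquiv (hdeg : ∀ x, 0 < G.degree x) (u v : V → ℝ) :
    inner ℝ (G.degWeightEquiv hdeg u) (G.degWeightEquiv hdeg v) = G.degInner u v := by
  simp only [degWeightEquiv, degInner, PiLp.inner_apply, mul_sum]
  refine sum_congr rfl fun x _ => ?_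
  simp only [LinearEquiv.trans_apply, WithLp.linearEquiv_symm_apply, AddEquiv.toEquiv_eq_coe,
    Equiv.invFun_as_coe, AddEquiv.coe_toEquiv_symm, WithLp.addEquiv_symm_apply,
    LinearEquiv.piCongrRight_apply, LinearEquiv.smulOfNeZero_apply, smul_eq_mul,
    RCLike.inner_apply, conj_trivial]
  have hweight : (0 : ℝ) ≤ G.degree x / Fintype.card V := by positivity
  linear_combination (u x * v x) * Real.mul_self_sqrt hweight

theorem isSymmetric_conj_neg_avgLap (hdeg : ∀ x, 0 < G.degree x) :
    ((G.degWeightEquiv hdeg).conj (-G.avgLap)).IsSymmetric := by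
  intro a b
  obtain ⟨u, rfl⟩ := (G.degWeightEquiv hdeg).surjective a
  obtain ⟨v, rfl⟩ := (G.degWeightEquiv hdeg).surjective b
  simp only [LinearEquiv.conj_apply_apply, LinearEquiv.symm_apply_apply, inner_degWeightEquiv,
    LinearMap.neg_apply, degInner_neg_right]
  rw [degInner_comm, degInner_neg_right, degInner_avgLap_comm]

theorem dirichletEnergy_add_smul_avgLap_le (hdeg : ∀ x, 0 < G.degree x) {ε c : ℝ}
    (hspec : ∀ μ, Module.End.HasEigenvalue (-G.avgLap) μ → μ * (1 - ε * μ) ^ 2 ≤ c * μ)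
    (v : V → ℝ) :
    G.dirichletEnergy (v + ε • G.avgLap v) ≤ c * G.dirichletEnergy v := by
  set e := G.degWeightEquiv hdeg
  set A := e.conj (-G.avgLap)
  have henergy (w : V → ℝ) : G.dirichletEnergy w = inner ℝ (A (e w)) (e w) := by
    rw [LinearEquiv.conj_apply_apply, e.symm_apply_apply, inner_degWeightEquiv, degInner_comm,
      LinearMap.neg_apply, degInner_neg_right, degInner_avgLap_self, neg_neg]
  have hstep : e (v + ε • G.avgLap v) = e v - ε • A (e v) := by
    simp only [A, LinearEquiv.conj_apply_apply, e.symm_apply_apply, map_add, map_smul,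
      LinearMap.neg_apply, map_neg, smul_neg, sub_neg_eq_add]
  rw [henergy, henergy, hstep]
  exact (G.isSymmetric_conj_neg_avgLap hdeg).inner_map_sub_smul_map_le
    (fun μ hμ => hspec μ hμ.of_conj) _

variable {G}

theorem Connected.dirichletEnergy_add_smul_avgLap_le (hG : G.Connected) {ε c : ℝ}
    (hspec : ∀ μ, Module.End.HasEigenvalue (-G.avgLap) μ → μ * (1 - ε * μ) ^ 2 ≤ c * μ)
    (v : V → ℝ) :
    G.dirichletEnergy (v + ε • G.avgLap v) ≤ c * G.dirichletEnergy v := by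
  rcases subsingleton_or_nontrivial V with _ | _
  · simp [dirichletEnergy_of_subsingleton]
  · exact G.dirichletEnergy_add_smul_avgLap_le
      (fun x => hG.preconnected.degree_pos_of_nontrivial x) hspec v

end SimpleGraph

end

theorem stmt_17_general {V : Type*} [Fintype V]
    (G : SimpleGraph V) [DecidableRel G.Adj] (hconn : G.Connected)
    (L : (V → ℝ) → (V → ℝ))
    (hL : ∀ v x, L v x = (1 / (G.degree x : ℝ)) * ∑ y ∈ G.neighborFinset x, v y - v x)
    (inn : (V → ℝ) → (V → ℝ) → ℝ)
    (hinn : ∀ u v, inn u v =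
      (1 / (Fintype.card V : ℝ)) * ∑ x, (G.degree x : ℝ) * u x * v x)
    (Λ : (V → ℝ) →ₗ[ℝ] (V → ℝ))
    (hΛ : ∀ u v : V → ℝ, -(inn u (L v)) = inn (Λ u) (Λ v))
    (lam1 lamK : ℝ) (hlam1 : 0 < lam1) (hlamK : lam1 ≤ lamK)
    (heig : ∀ (μ : ℝ) (v : V → ℝ), v ≠ 0 → (∀ x, -(L v x) = μ * v x) →
      μ = 0 ∨ (lam1 ≤ μ ∧ μ ≤ lamK))
    (f : ℝ → ℝ) (hf : Differentiable ℝ f)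
    (C : ℝ) (hC : ∀ x, |deriv f x| ≤ C)
    (ε : ℝ) (hε : 2 / (lam1 + lamK) ≤ ε)
    (hstab : (ε * lamK - 1) * C < 1)
    (u : ℕ → V → ℝ)
    (hdyn : ∀ n x, u (n + 1) x = ε * L (fun y => f (u n y)) x + f (u n x))
    (Φ : ℕ → ℝ) (hΦ : ∀ n, Φ n = inn (Λ (u n)) (Λ (u n))) :
    Tendsto Φ atTop (nhds 0) := by
  obtain rfl : L = ⇑G.avgLap := funext₂ hL
  obtain rfl : inn = G.degInner := funext₂ hinn
  have hΦ_eq (n : ℕ) : Φ n = G.dirichletEnergy (u n) := by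
    rw [hΦ, ← hΛ, G.degInner_avgLap_self, neg_neg]
  have hspec (μ : ℝ) (hμ : Module.End.HasEigenvalue (-G.avgLap) μ) :
      μ * (1 - ε * μ) ^ 2 ≤ (ε * lamK - 1) ^ 2 * μ := by
    obtain ⟨v, hv⟩ := hμ.exists_hasEigenvector
    exact mul_one_sub_mul_sq_le hlam1 hε (heig μ v hv.2 fun x => congrFun hv.apply_eq_smul x)
  have hlip (p q : ℝ) : |f p - f q| ≤ C * |p - q| :=
    convex_univ.norm_image_sub_le_of_norm_deriv_le (fun x _ => hf x) (fun x _ => hC x)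
      trivial trivial
  have hstep (n : ℕ) : Φ (n + 1) ≤ ((ε * lamK - 1) * C) ^ 2 * Φ n := by
    have hu : u (n + 1) = f ∘ u n + ε • G.avgLap (f ∘ u n) := by
      funext x
      rw [hdyn, add_comm]
      rfl
    calc Φ (n + 1) ≤ (ε * lamK - 1) ^ 2 * G.dirichletEnergy (f ∘ u n) := by
          rw [hΦ_eq, hu]
          exact hconn.dirichletEnergy_add_smul_avgLap_le hspec _
      _ ≤ (ε * lamK - 1) ^ 2 * (C ^ 2 * Φ n) := by
          rw [hΦ_eq]
          gcongr
          exact G.dirichletEnergy_comp_le hlip _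
      _ = ((ε * lamK - 1) * C) ^ 2 * Φ n := by ring
  have hrate : 0 ≤ (ε * lamK - 1) * C :=
    mul_nonneg ((abs_nonneg _).trans (abs_one_sub_mul_le hlam1 hε hlamK le_rfl))
      ((abs_nonneg _).trans (hC 0))
  exact tendsto_zero_of_le_mul_of_lt_one (fun n => hΦ_eq n ▸ G.dirichletEnergy_nonneg _)
    (sq_nonneg _) (pow_lt_one₀ hrate hstab two_ne_zero) hstep

/-- Remark after Theorem 1: if `ε ≥ 2/(λ₁ + λ_K)`, the coupled map lattice asymptotically
synchronizes provided `(ελ_K - 1)·sup|f'| < 1`, i.e. `Φ(n) = ‖Λ u(·,n)‖² → 0`. -/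
theorem stmt_17 {V : Type*} [Fintype V] [DecidableEq V] [Nonempty V]
    (G : SimpleGraph V) [DecidableRel G.Adj] (hconn : G.Connected)
    (L : (V → ℝ) → (V → ℝ))
    (hL : ∀ v x, L v x = (1 / (G.degree x : ℝ)) * ∑ y ∈ G.neighborFinset x, v y - v x)
    (inn : (V → ℝ) → (V → ℝ) → ℝ)
    (hinn : ∀ u v, inn u v =
      (1 / (Fintype.card V : ℝ)) * ∑ x, (G.degree x : ℝ) * u x * v x)
    (Λ : (V → ℝ) →ₗ[ℝ] (V → ℝ))
    (hΛ : ∀ u v : V → ℝ, -(inn u (L v)) = inn (Λ u) (Λ v))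
    (lam1 lamK : ℝ) (hlam1 : 0 < lam1) (hlamK : lam1 ≤ lamK)
    (heig : ∀ (μ : ℝ) (v : V → ℝ), v ≠ 0 → (∀ x, -(L v x) = μ * v x) →
      μ = 0 ∨ (lam1 ≤ μ ∧ μ ≤ lamK))
    (f : ℝ → ℝ) (hf : Differentiable ℝ f)
    (C : ℝ) (hC : ∀ x, |deriv f x| ≤ C)
    (ε : ℝ) (hε : 2 / (lam1 + lamK) ≤ ε)
    (hstab : (ε * lamK - 1) * C < 1)
    (u : ℕ → V → ℝ)
    (hdyn : ∀ n x, u (n + 1) x = ε * L (fun y => f (u n y)) x + f (u n x))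
    (Φ : ℕ → ℝ) (hΦ : ∀ n, Φ n = inn (Λ (u n)) (Λ (u n))) :
    Tendsto Φ atTop (nhds 0) :=
  stmt_17_general G hconn L hL inn hinn Λ hΛ lam1 lamK hlam1 hlamK heig f hf C hC ε hε hstab u hdyn
    Φ hΦ
end

section
/- Courant nodal domain theorem for graphs: let u_k be an eigenfunction of -L for the eigenvalue lambda_k (eigenvalues ordered 0 = lambda_0 < lambda_1 <= ... <= lambda_K). Delete from the graph all edges {x, y} with u_k(x) * u_k(y) < 0. Then the resulting graph has at most k + 1 connected components. -/
/-!
Let `m` be the number of nodal domains of `u` and suppose `m > k + 1`. Functions `a * u` with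
`a` constant on each nodal domain form the image of an `m`-dimensional space, so some
non-constant such `a` makes `a * u` degree-orthogonal to the eigenvectors with eigenvalue
`< lam k`, of which there are at most `k`. Its Rayleigh quotient is then `≥ lam k`. On the other
hand, the eigen-equation of `u` gives
`2 (⟪L (a u), a u⟫ - lam k ⟪a u, a u⟫) = ∑_{x ~ y} (a x - a y)² u x u y`,
whose terms vanish inside nodal domains and are `≤ 0` on sign-changing edges. So all terms
vanish, `a` is constant across every edge, hence constant by connectivity: a contradiction.
-/

open Finset Module Module.End LinearMap
open scoped RealInnerProductSpace

theorem Finset.card_filter_comp_eq_of_card_fiber_eq {ι κ α : Type*} [Fintype ι] [Fintype κ]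
    [DecidableEq α] {f : ι → α} {g : κ → α} (h : ∀ t, #{i | f i = t} = #{j | g j = t})
    (p : α → Prop) [DecidablePred p] : #{i | p (f i)} = #{j | p (g j)} := by
  simp only [card_def, filter_val] at h ⊢
  have hfg : univ.val.map f = univ.val.map g := Multiset.ext.2 fun t => by
    simpa [Multiset.count_map, eq_comm] using h t
  simpa [Multiset.filter_map] using congrArg (fun s => Multiset.card (s.filter p)) hfg

theorem Monotone.card_filter_lt_apply_le {α : Type*} [Preorder α] [DecidableLT α] {n : ℕ}
    {f : Fin n → α} (hf : Monotone f) (k : Fin n) : #{i | f i < f k} ≤ k :=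
  calc #{i | f i < f k} ≤ #(Iio k) :=
        card_le_card fun _ hi => mem_Iio.2 (hf.reflect_lt (mem_filter.1 hi).2)
    _ = k := Fin.card_Iio k

theorem Module.End.eigenspace_conj {R M N : Type*} [CommRing R] [AddCommGroup M] [Module R M]
    [AddCommGroup N] [Module R N] (e : M ≃ₗ[R] N) (f : Module.End R M) (t : R) :
    eigenspace (e.conj f) t = (eigenspace f t).map (e : M →ₗ[R] N) := by
  ext w
  rw [Submodule.mem_map_equiv, mem_eigenspace_iff, mem_eigenspace_iff, LinearEquiv.conj_apply,
    LinearMap.comp_apply, LinearMap.comp_apply, LinearEquiv.coe_coe, LinearEquiv.coe_coe,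
    ← e.eq_symm_apply, map_smul]

theorem LinearMap.IsSymmetric.mul_norm_sq_le_inner_of_inner_eigenvectorBasis_eq_zero
    {E : Type*} [NormedAddCommGroup E] [InnerProductSpace ℝ E] [FiniteDimensional ℝ E]
    {T : E →ₗ[ℝ] E} (hT : T.IsSymmetric) {n : ℕ} (hn : finrank ℝ E = n) {c : ℝ} {w : E}
    (hw : ∀ i, hT.eigenvalues hn i < c → ⟪hT.eigenvectorBasis hn i, w⟫ = 0) :
    c * ‖w‖ ^ 2 ≤ ⟪T w, w⟫ := by
  set b := hT.eigenvectorBasis hn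
  have hTw : ⟪T w, w⟫ = ∑ i, hT.eigenvalues hn i * ⟪b i, w⟫ ^ 2 := by
    rw [← b.sum_inner_mul_inner]
    refine sum_congr rfl fun i _ => ?_
    rw [hT w (b i), hT.apply_eigenvectorBasis, real_inner_smul_right, real_inner_comm]
    simp only [RCLike.ofReal_real_eq_id, id_eq, b]
    ring
  rw [hTw, ← b.sum_sq_inner_right, mul_sum]
  refine sum_le_sum fun i _ => ?_
  rcases lt_or_ge (hT.eigenvalues hn i) c with h | h
  · simp [hw i h]
  · exact mul_le_mul_of_nonneg_right h (sq_nonneg _)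

theorem card_le_finrank_range_add_one_of_ker_le {K ι M : Type*} [Field K] [Fintype ι]
    [AddCommGroup M] [Module K M] (A : (ι → K) →ₗ[K] M) (hA : ker A ≤ K ∙ 1) :
    Fintype.card ι ≤ finrank K (range A) + 1 := by
  have hker : finrank K (ker A) ≤ 1 :=
    (Submodule.finrank_mono hA).trans
      ((finrank_span_le_card ({1} : Set (ι → K))).trans (by simp))
  have := A.finrank_range_add_finrank_ker
  rw [Module.finrank_fintype_fun_eq_card] at this
  omega

section Weighted

variable {V : Type*} [Fintype V]

def weightedInner (D f g : V → ℝ) : ℝ := ∑ x, D x * f x * g x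

theorem weightedInner_comm (D f g : V → ℝ) : weightedInner D f g = weightedInner D g f :=
  sum_congr rfl fun x _ => by ring

variable {D : V → ℝ}

noncomputable def sqrtWeightEquiv (hD : ∀ x, 0 < D x) :
    (V → ℝ) ≃ₗ[ℝ] EuclideanSpace ℝ V where
  toFun f := WithLp.toLp 2 fun x => √(D x) * f x
  invFun w x := w x / √(D x)
  map_add' f g := by ext x; simp [mul_add]
  map_smul' r f := by ext x; simp [mul_left_comm]
  left_inv f := by ext x; exact mul_div_cancel_left₀ _ (Real.sqrt_pos.2 (hD x)).ne'
  right_inv w := by ext x; exact mul_div_cancel₀ _ (Real.sqrt_pos.2 (hD x)).ne'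

theorem inner_sqrtWeightEquiv (hD : ∀ x, 0 < D x) (f g : V → ℝ) :
    ⟪sqrtWeightEquiv hD f, sqrtWeightEquiv hD g⟫ = weightedInner D f g := by
  simp only [PiLp.inner_apply, weightedInner, sqrtWeightEquiv, LinearEquiv.coe_mk,
    LinearMap.coe_mk, AddHom.coe_mk, RCLike.inner_apply, conj_trivial]
  refine sum_congr rfl fun x _ => ?_
  linear_combination (f x * g x) * Real.mul_self_sqrt (hD x).le

/-- `P` is the `D`-orthogonal projection onto the eigenvectors with eigenvalue `< c`. -/
theorem exists_finrank_range_le_and_le_rayleigh_of_mem_ker (hD : ∀ x, 0 < D x)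
    (Lop : Module.End ℝ (V → ℝ))
    (hsym : ∀ f g, weightedInner D (Lop f) g = weightedInner D f (Lop g))
    {n : ℕ} (lam : Fin n → ℝ)
    (hmult : ∀ t, #{i | lam i = t} = finrank ℝ (eigenspace Lop t))
    (c : ℝ) :
    ∃ P : Module.End ℝ (V → ℝ), finrank ℝ (range P) ≤ #{i | lam i < c} ∧
      ∀ v, P v = 0 → c * weightedInner D v v ≤ weightedInner D (Lop v) v := by
  set e := sqrtWeightEquiv hD
  have he : ∀ f g, ⟪e f, e g⟫ = weightedInner D f g := inner_sqrtWeightEquiv hD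
  set T := e.conj Lop
  have hT : T.IsSymmetric := fun v w => by
    rw [← e.apply_symm_apply v, ← e.apply_symm_apply w]
    simp only [T, LinearEquiv.conj_apply_apply, LinearEquiv.symm_apply_apply, he, hsym]
  have hn : finrank ℝ (EuclideanSpace ℝ V) = Fintype.card V := finrank_euclideanSpace
  set b := hT.eigenvectorBasis hn
  set μ := hT.eigenvalues hn
  have hcount : #{i | μ i < c} = #{i | lam i < c} := by
    refine card_filter_comp_eq_of_card_fiber_eq (fun t => ?_) (· < c)
    have := hT.card_filter_eigenvalues_eq hn t
    simp only [RCLike.ofReal_real_eq_id, id_eq] at this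
    rw [this, eigenspace_conj, LinearEquiv.finrank_map_eq, hmult]
  set K := Submodule.span ℝ (Set.range fun i : {i // μ i < c} => b i)
  set P := e.symm.toLinearMap ∘ₗ K.starProjection.toLinearMap ∘ₗ e.toLinearMap
  refine ⟨P, ?_, fun v hv => ?_⟩
  · have hrange : range P ≤ K.map (e.symm : EuclideanSpace ℝ V →ₗ[ℝ] V → ℝ) := by
      rintro _ ⟨v, rfl⟩
      exact ⟨_, K.starProjection_apply_mem (e v), rfl⟩
    calc finrank ℝ (range P) ≤ finrank ℝ K :=
          (Submodule.finrank_mono hrange).trans_eq (e.symm.finrank_map_eq K)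
      _ ≤ Fintype.card {i // μ i < c} := finrank_range_le_card _
      _ = #{i | lam i < c} := by rw [Fintype.card_subtype, hcount]
  · have hK : e v ∈ Kᗮ := by
      simpa [P, Submodule.starProjection_apply_eq_zero_iff] using hv
    have := hT.mul_norm_sq_le_inner_of_inner_eigenvectorBasis_eq_zero hn (c := c) (w := e v)
      fun i hi => Submodule.inner_right_of_mem_orthogonal
        (Submodule.subset_span (Set.mem_range_self (⟨i, hi⟩ : {i // μ i < c}))) hK
    rwa [← real_inner_self_eq_norm_sq, he, LinearEquiv.conj_apply_apply,
      LinearEquiv.symm_apply_apply, he] at this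

end Weighted

namespace SimpleGraph

theorem Preconnected.apply_eq_of_forall_adj {V α : Type*} {G : SimpleGraph V}
    (hG : G.Preconnected) {f : V → α} (hf : ∀ x y, G.Adj x y → f x = f y) (x y : V) :
    f x = f y := by
  obtain ⟨p⟩ := hG x y
  induction p with
  | nil => rfl
  | cons h _ ih => exact (hf _ _ h).trans ih

theorem Connected.mem_span_one_of_forall_adj {V R : Type*} [Semiring R] {G G' : SimpleGraph V}
    (hG : G.Connected) {a : G'.ConnectedComponent → R}
    (ha : ∀ x y, G.Adj x y → a (G'.connectedComponentMk x) = a (G'.connectedComponentMk y)) :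
    a ∈ R ∙ 1 := by
  obtain ⟨x₀⟩ := hG.nonempty
  refine Submodule.mem_span_singleton.2 ⟨a (G'.connectedComponentMk x₀),
    funext <| ConnectedComponent.ind fun x => ?_⟩
  simpa using hG.preconnected.apply_eq_of_forall_adj ha x₀ x

variable {V : Type*} [Fintype V] (G : SimpleGraph V) [DecidableRel G.Adj]

theorem sum_sum_neighborFinset_swap {M : Type*} [AddCommMonoid M] (F : V → V → M) :
    ∑ x, ∑ y ∈ G.neighborFinset x, F x y = ∑ x, ∑ y ∈ G.neighborFinset x, F y x :=
  sum_comm' fun x y => by simp [G.adj_comm]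

def IsRandomWalkLaplacian (Lop : Module.End ℝ (V → ℝ)) : Prop :=
  ∀ v x, Lop v x = v x - (1 / (G.degree x : ℝ)) * ∑ y ∈ G.neighborFinset x, v y

namespace IsRandomWalkLaplacian

variable {G} {Lop : Module.End ℝ (V → ℝ)}

-- Also at isolated vertices, where `1 / 0 = 0` and the neighbourhood is empty.
theorem degree_mul_apply (hLop : G.IsRandomWalkLaplacian Lop) (f : V → ℝ) (x : V) :
    G.degree x * Lop f x = G.degree x * f x - ∑ y ∈ G.neighborFinset x, f y := by
  rcases eq_or_ne (G.degree x) 0 with hx | hx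
  · simp [← card_neighborFinset_eq_degree, card_eq_zero] at hx
    simp [hx]
  · rw [hLop]
    field_simp

theorem weightedInner_degree_apply (hLop : G.IsRandomWalkLaplacian Lop) (f g : V → ℝ) :
    weightedInner (fun x => G.degree x) (Lop f) g =
      weightedInner (fun x => G.degree x) f g - ∑ x, ∑ y ∈ G.neighborFinset x, f y * g x := by
  simp only [weightedInner, ← sum_sub_distrib, hLop.degree_mul_apply, sub_mul, sum_mul]

theorem weightedInner_degree_symm (hLop : G.IsRandomWalkLaplacian Lop) (f g : V → ℝ) :
    weightedInner (fun x => G.degree x) (Lop f) g =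
      weightedInner (fun x => G.degree x) f (Lop g) := by
  rw [weightedInner_comm _ f, hLop.weightedInner_degree_apply, hLop.weightedInner_degree_apply,
    weightedInner_comm _ g, sum_sum_neighborFinset_swap]
  simp only [mul_comm]

theorem two_mul_rayleigh_sub_eq (hLop : G.IsRandomWalkLaplacian Lop) {u : V → ℝ} {c : ℝ}
    (heig : Lop u = fun x => c * u x) (a : V → ℝ) :
    2 * (weightedInner (fun x => G.degree x) (Lop (a * u)) (a * u) -
        c * weightedInner (fun x => G.degree x) (a * u) (a * u)) =
      ∑ x, ∑ y ∈ G.neighborFinset x, (a x - a y) ^ 2 * (u x * u y) := by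
  have hc : c * weightedInner (fun x => G.degree x) (a * u) (a * u) =
      ∑ x, (G.degree x * u x - ∑ y ∈ G.neighborFinset x, u y) * (a x ^ 2 * u x) := by
    rw [weightedInner, mul_sum]
    refine sum_congr rfl fun x _ => ?_
    rw [← hLop.degree_mul_apply, heig, Pi.mul_apply]
    ring
  have hdiff : weightedInner (fun x => G.degree x) (Lop (a * u)) (a * u) -
      c * weightedInner (fun x => G.degree x) (a * u) (a * u) =
      ∑ x, ∑ y ∈ G.neighborFinset x, a x * (a x - a y) * (u x * u y) := by
    rw [hLop.weightedInner_degree_apply, hc, weightedInner, ← sum_sub_distrib,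
      ← sum_sub_distrib]
    refine sum_congr rfl fun x _ => ?_
    have hx : ∑ y ∈ G.neighborFinset x, a x * (a x - a y) * (u x * u y) =
        a x ^ 2 * u x * ∑ y ∈ G.neighborFinset x, u y -
          a x * u x * ∑ y ∈ G.neighborFinset x, (a * u) y := by
      rw [mul_sum, mul_sum, ← sum_sub_distrib]
      exact sum_congr rfl fun y _ => by rw [Pi.mul_apply]; ring
    rw [hx, ← sum_mul, Pi.mul_apply]
    ring
  rw [hdiff, two_mul]
  nth_rewrite 2 [sum_sum_neighborFinset_swap]
  simp only [← sum_add_distrib]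
  exact sum_congr rfl fun x _ => sum_congr rfl fun y _ => by ring

theorem eq_of_adj_of_le_rayleigh (hLop : G.IsRandomWalkLaplacian Lop) {u : V → ℝ} {c : ℝ}
    (heig : Lop u = fun x => c * u x) {a : V → ℝ}
    (ha : ∀ x y, G.Adj x y → 0 ≤ u x * u y → a x = a y)
    (hR : c * weightedInner (fun x => G.degree x) (a * u) (a * u) ≤
      weightedInner (fun x => G.degree x) (Lop (a * u)) (a * u))
    {x y : V} (hxy : G.Adj x y) : a x = a y := by
  have hterm : ∀ x, ∀ y ∈ G.neighborFinset x, (a x - a y) ^ 2 * (u x * u y) ≤ 0 := by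
    intro x y hy
    rcases le_or_gt 0 (u x * u y) with h | h
    · simp [ha x y ((G.mem_neighborFinset x y).1 hy) h]
    · exact mul_nonpos_of_nonneg_of_nonpos (sq_nonneg _) h.le
  have hsum : ∑ x, ∑ y ∈ G.neighborFinset x, (a x - a y) ^ 2 * (u x * u y) = 0 := by
    refine le_antisymm (sum_nonpos fun x _ => sum_nonpos (hterm x)) ?_
    rw [← hLop.two_mul_rayleigh_sub_eq heig a]
    linarith
  have hxy0 : (a x - a y) ^ 2 * (u x * u y) = 0 := by
    rw [sum_eq_zero_iff_of_nonpos fun x _ => sum_nonpos (hterm x)] at hsum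
    exact (sum_eq_zero_iff_of_nonpos (hterm x)).1 (hsum x (mem_univ x)) y
      ((G.mem_neighborFinset x y).2 hxy)
  rcases le_or_gt 0 (u x * u y) with h | h
  · exact ha x y hxy h
  · simpa [sub_eq_zero, h.ne] using hxy0

end IsRandomWalkLaplacian

end SimpleGraph

theorem stmt_18_general {V : Type*} [Fintype V]
    (G : SimpleGraph V) [DecidableRel G.Adj] (hconn : G.Connected)
    (Lop : (V → ℝ) →ₗ[ℝ] (V → ℝ))
    (hLop : ∀ v x, Lop v x =
      v x - (1 / (G.degree x : ℝ)) * ∑ y ∈ G.neighborFinset x, v y)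
    (lam : Fin (Fintype.card V) → ℝ) (hmono : Monotone lam)
    (hmult : ∀ μ : ℝ, (Finset.univ.filter (fun i => lam i = μ)).card =
      Module.finrank ℝ (Module.End.eigenspace Lop μ))
    (k : Fin (Fintype.card V)) (u : V → ℝ)
    (heig : Lop u = fun x => lam k * u x) :
    ∀ G' : SimpleGraph V,
      (∀ x y, G'.Adj x y ↔ G.Adj x y ∧ ¬ (u x * u y < 0)) →
      Nat.card G'.ConnectedComponent ≤ (k : ℕ) + 1 := by
  intro G' hG'
  have := Fintype.ofFinite G'.ConnectedComponent
  by_contra! hcard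
  rw [Nat.card_eq_fintype_card] at hcard
  -- Degrees are positive, as the weighted spectral theorem needs, once `V` has two vertices.
  have : Nontrivial V := by
    have := Fintype.card_le_of_surjective _ fun C : G'.ConnectedComponent => C.exists_rep
    exact Fintype.one_lt_card_iff_nontrivial.1 (by omega)
  have hLop' : G.IsRandomWalkLaplacian Lop := hLop
  have hdeg (x : V) : 0 < (G.degree x : ℝ) :=
    mod_cast hconn.preconnected.degree_pos_of_nontrivial x
  obtain ⟨P, hPrank, hP⟩ := exists_finrank_range_le_and_le_rayleigh_of_mem_ker hdeg Lop
    hLop'.weightedInner_degree_symm lam hmult (lam k)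
  let A := P ∘ₗ mulRight ℝ u ∘ₗ funLeft ℝ ℝ G'.connectedComponentMk
  have hker : ker A ≤ ℝ ∙ 1 := fun a ha =>
    hconn.mem_span_one_of_forall_adj fun x y hxy =>
      hLop'.eq_of_adj_of_le_rayleigh heig (a := a ∘ G'.connectedComponentMk)
        (fun x y hxy hu => congrArg a (SimpleGraph.ConnectedComponent.connectedComponentMk_eq_of_adj
          ((hG' x y).2 ⟨hxy, not_lt.2 hu⟩))) (hP _ ha) hxy
  have hrange : finrank ℝ (range A) ≤ finrank ℝ (range P) :=
    Submodule.finrank_mono (range_comp_le_range _ P)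
  have := card_le_finrank_range_add_one_of_ker_le A hker
  have := hmono.card_filter_lt_apply_le k
  omega

/-- Courant nodal domain theorem for graphs: let `lam : Fin |V| → ℝ` be the nondecreasing
enumeration (with multiplicity) of the eigenvalues of `-L` on a finite connected graph,
and let `u` be an eigenfunction for `lam k`. Deleting from the graph all edges `{x, y}`
with `u x * u y < 0` leaves at most `k + 1` connected components. -/
theorem stmt_18 {V : Type*} [Fintype V] [DecidableEq V] [Nonempty V]
    (G : SimpleGraph V) [DecidableRel G.Adj] (hconn : G.Connected)
    (Lop : (V → ℝ) →ₗ[ℝ] (V → ℝ))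
    (hLop : ∀ v x, Lop v x =
      v x - (1 / (G.degree x : ℝ)) * ∑ y ∈ G.neighborFinset x, v y)
    (lam : Fin (Fintype.card V) → ℝ) (hmono : Monotone lam)
    (hmult : ∀ μ : ℝ, (Finset.univ.filter (fun i => lam i = μ)).card =
      Module.finrank ℝ (Module.End.eigenspace Lop μ))
    (k : Fin (Fintype.card V)) (u : V → ℝ) (hu : u ≠ 0)
    (heig : Lop u = fun x => lam k * u x) :
    ∀ G' : SimpleGraph V,
      (∀ x y, G'.Adj x y ↔ G.Adj x y ∧ ¬ (u x * u y < 0)) →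
      Nat.card G'.ConnectedComponent ≤ (k : ℕ) + 1 :=
  stmt_18_general G hconn Lop hLop lam hmono hmult k u heig
end
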